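/- Let n = 4k with k ≥ 1, and let w : ZMod n → Bool × Bool be a minimum dominating word for the prism graph G_n. Then every letter of w lies in {C, A, B}, the letter C occurs exactly 2k times, the letters A and B occur 2k times in total, and there exists s ∈ ZMod n such that the cyclic rotation of w by s equals the periodic word (B C A C)^k or the periodic word (A C B C)^k. -/

import Mathlib

/-- The prism graph `C_n □ P_2` on vertex set `ZMod n × Fin 2`:
`(i,r)` is adjacent to `(i±1,r)` and to `(i,1-r)`. -/
def prismGraph (n : ℕ) : SimpleGraph (ZMod n × Fin 2) where
  Adj u v := u ≠ v ∧
    ((u.1 = v.1 ∧ u.2 ≠ v.2) ∨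
     (u.2 = v.2 ∧ (u.1 = v.1 + 1 ∨ v.1 = u.1 + 1)))
  symm := by
    constructor
    rintro ⟨i, r⟩ ⟨j, s⟩ ⟨hne, h⟩
    refine ⟨Ne.symm hne, ?_⟩
    rcases h with ⟨h1, h2⟩ | ⟨h1, h2⟩
    · exact Or.inl ⟨h1.symm, h2.symm⟩
    · exact Or.inr ⟨h1.symm, h2.symm⟩
  loopless := by
    constructor
    rintro ⟨i, r⟩ ⟨hne, -⟩
    exact hne rfl

/-- `S` is a dominating set of the prism graph: every vertex is in `S`
or adjacent to a vertex of `S`. -/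
def IsDominatingSet (n : ℕ) (S : Set (ZMod n × Fin 2)) : Prop :=
  ∀ v, v ∈ S ∨ ∃ u ∈ S, (prismGraph n).Adj u v

/-- The domination number `γ(G_n)`: minimum cardinality of a dominating set. -/
noncomputable def domNum (n : ℕ) : ℕ :=
  sInf {k | ∃ S : Finset (ZMod n × Fin 2), S.card = k ∧ IsDominatingSet n ↑S}

/-- The dominion `ζ(G_n)`: the number of dominating sets of cardinality `γ(G_n)`. -/
noncomputable def dominion (n : ℕ) : ℕ :=
  {S : Finset (ZMod n × Fin 2) | S.card = domNum n ∧ IsDominatingSet n ↑S}.ncard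

/-- The set of vertices encoded by a word `w : ZMod n → Bool × Bool`;
the first bit of `w i` records membership of the top vertex `(i,0)`,
the second bit that of the bottom vertex `(i,1)`. -/
def wordSet (n : ℕ) (w : ZMod n → Bool × Bool) : Set (ZMod n × Fin 2) :=
  {v | (if v.2 = 0 then (w v.1).1 else (w v.1).2) = true}

/-- A minimum dominating word: it encodes a dominating set of cardinality `γ(G_n)`. -/
def IsMinDomWord (n : ℕ) (w : ZMod n → Bool × Bool) : Prop :=
  IsDominatingSet n (wordSet n w) ∧ (wordSet n w).ncard = domNum n

def letC : Bool × Bool := (false, false)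
def letA : Bool × Bool := (true, false)
def letB : Bool × Bool := (false, true)
def letD : Bool × Bool := (true, true)

/-- The periodic word with period-4 pattern `x0 x1 x2 x3`. -/
def pat4 (n : ℕ) (x0 x1 x2 x3 : Bool × Bool) (i : ZMod n) : Bool × Bool :=
  if i.val % 4 = 0 then x0 else if i.val % 4 = 1 then x1
  else if i.val % 4 = 2 then x2 else x3

/-! Each closed neighbourhood of the prism has at most four vertices, so a dominating set of
`C_n □ P_2` has at least `n / 2` elements, and `(A C B C)^k` attains this bound when `n = 4k`.
A dominating set attaining the bound is a perfect code: every vertex is dominated exactly once.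
In a perfect code an element `(i, r)` forces column `i + 1` to be empty and `(i + 2, r + 1)` to be
an element, so the whole word is determined by any one of its nonempty columns. -/

open Finset

section Cover

variable {α β : Type*} [Fintype β] [DecidableEq β] {S : Finset α} {N : α → Finset β} {d : ℕ}

theorem card_le_card_mul_of_cover (hN : ∀ u ∈ S, #(N u) ≤ d) (hS : ∀ v, ∃ u ∈ S, v ∈ N u) :
    Fintype.card β ≤ #S * d :=
  calc Fintype.card β = #(S.biUnion N) := by
        rw [← card_univ, eq_univ_of_forall fun v => mem_biUnion.2 (hS v)]
    _ ≤ #S * d := card_biUnion_le_card_mul S N d hN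

theorem eq_of_mem_of_card_eq_card_mul (hN : ∀ u ∈ S, #(N u) ≤ d)
    (hS : ∀ v, ∃ u ∈ S, v ∈ N u) (hcard : Fintype.card β = #S * d) {u₁ u₂ : α} {v : β}
    (hu₁ : u₁ ∈ S) (hu₂ : u₂ ∈ S) (hv₁ : v ∈ N u₁) (hv₂ : v ∈ N u₂) : u₁ = u₂ := by
  classical
  by_contra hne
  -- `v` is already covered by `N u₁`, so dropping it from `N u₂` leaves a cover of size `< #S * d`.
  have hcover : univ ⊆ (S.erase u₂).biUnion N ∪ (N u₂).erase v := by
    intro x _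
    obtain ⟨u, hu, hx⟩ := hS x
    by_cases hu' : u = u₂
    · by_cases hxv : x = v
      · subst hxv
        exact mem_union_left _ (mem_biUnion.2 ⟨u₁, mem_erase.2 ⟨hne, hu₁⟩, hv₁⟩)
      · exact mem_union_right _ (mem_erase.2 ⟨hxv, hu' ▸ hx⟩)
    · exact mem_union_left _ (mem_biUnion.2 ⟨u, mem_erase.2 ⟨hu', hu⟩, hx⟩)
  have hS' := card_erase_add_one hu₂
  have hN' := card_erase_add_one hv₂
  have hbig := card_biUnion_le_card_mul (S.erase u₂) N d fun u hu => hN u (mem_of_mem_erase hu)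
  have hsmall := hN u₂ hu₂
  have := (card_le_card hcover).trans (card_union_le _ _)
  rw [card_univ, hcard, ← hS'] at this
  nlinarith

end Cover

def closedNbhd (n : ℕ) (u : ZMod n × Fin 2) : Finset (ZMod n × Fin 2) :=
  {u, (u.1 + 1, u.2), (u.1 - 1, u.2), (u.1, u.2 + 1)}

section ClosedNbhd

variable {n : ℕ}

theorem mem_closedNbhd {u v : ZMod n × Fin 2} :
    v ∈ closedNbhd n u ↔ v = u ∨ v = (u.1 + 1, u.2) ∨ v = (u.1 - 1, u.2) ∨ v = (u.1, u.2 + 1) := by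
  simp [closedNbhd]

theorem self_mem_closedNbhd (u : ZMod n × Fin 2) : u ∈ closedNbhd n u :=
  mem_closedNbhd.2 (Or.inl rfl)

theorem card_closedNbhd_le (u : ZMod n × Fin 2) : #(closedNbhd n u) ≤ 4 :=
  card_le_four

theorem mem_closedNbhd_of_adj {u v : ZMod n × Fin 2} (h : (prismGraph n).Adj u v) :
    v ∈ closedNbhd n u := by
  obtain ⟨i, r⟩ := u
  obtain ⟨j, s⟩ := v
  obtain ⟨-, ⟨rfl, hrs⟩ | ⟨rfl, h | h⟩⟩ := h
  · have : s = r + 1 := by simp only at hrs; omega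
    simp [mem_closedNbhd, this]
  all_goals simp only at h; simp [mem_closedNbhd, h]

theorem mem_closedNbhd_comm {u v : ZMod n × Fin 2} :
    v ∈ closedNbhd n u ↔ u ∈ closedNbhd n v := by
  suffices ∀ u v : ZMod n × Fin 2, v ∈ closedNbhd n u → u ∈ closedNbhd n v from ⟨this u v, this v u⟩
  rintro ⟨i, r⟩ v h
  rcases mem_closedNbhd.1 h with rfl | rfl | rfl | rfl <;> simp [mem_closedNbhd]
  omega

end ClosedNbhd

section Domination

variable {n : ℕ}

theorem isDominatingSet_iff {S : Set (ZMod n × Fin 2)} :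
    IsDominatingSet n S ↔ ∀ v, ∃ u ∈ S, v ∈ closedNbhd n u := by
  refine ⟨fun hS v => ?_, fun hS v => ?_⟩
  · obtain hv | ⟨u, hu, huv⟩ := hS v
    exacts [⟨v, hv, self_mem_closedNbhd v⟩, ⟨u, hu, mem_closedNbhd_of_adj huv⟩]
  · obtain ⟨⟨i, r⟩, hu, hv⟩ := hS v
    by_cases heq : v = (i, r)
    · exact Or.inl (heq ▸ hu)
    refine Or.inr ⟨(i, r), hu, heq ∘ Eq.symm, ?_⟩
    rcases mem_closedNbhd.1 hv with rfl | rfl | rfl | rfl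
    · exact absurd rfl heq
    · exact Or.inr ⟨rfl, Or.inr rfl⟩
    · exact Or.inr ⟨rfl, Or.inl (sub_add_cancel i 1).symm⟩
    · exact Or.inl ⟨rfl, by simp⟩

theorem IsDominatingSet.two_mul_le_four_mul_card [NeZero n] {S : Finset (ZMod n × Fin 2)}
    (hS : IsDominatingSet n ↑S) : 2 * n ≤ 4 * #S := by
  have := card_le_card_mul_of_cover (fun u _ => card_closedNbhd_le u) (isDominatingSet_iff.1 hS)
  simp only [Fintype.card_prod, ZMod.card, Fintype.card_fin] at this
  linarith

/-- Also called a perfect code. -/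
def IsEfficientDominatingSet (n : ℕ) (S : Set (ZMod n × Fin 2)) : Prop :=
  ∀ v, ∃! u, u ∈ S ∧ v ∈ closedNbhd n u

theorem IsDominatingSet.isEfficientDominatingSet [NeZero n] {S : Set (ZMod n × Fin 2)}
    (hS : IsDominatingSet n S) (hcard : 4 * S.ncard = 2 * n) : IsEfficientDominatingSet n S := by
  obtain ⟨T, rfl⟩ := (Set.toFinite S).exists_finset_coe
  rw [Set.ncard_coe_finset] at hcard
  have hcover := isDominatingSet_iff.1 hS
  have hcard' : Fintype.card (ZMod n × Fin 2) = #T * 4 := by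
    simp only [Fintype.card_prod, ZMod.card, Fintype.card_fin]
    linarith
  intro v
  obtain ⟨u, hu, hv⟩ := hcover v
  exact ⟨u, ⟨hu, hv⟩, fun u' ⟨hu', hv'⟩ => eq_of_mem_of_card_eq_card_mul
    (fun u _ => card_closedNbhd_le u) hcover hcard' hu' hu hv' hv⟩

end Domination

namespace IsEfficientDominatingSet

variable {n : ℕ} {S : Set (ZMod n × Fin 2)}

theorem eq_of_mem (hS : IsEfficientDominatingSet n S) {u₁ u₂ v : ZMod n × Fin 2}
    (h₁ : u₁ ∈ S) (h₂ : u₂ ∈ S) (hv₁ : v ∈ closedNbhd n u₁) (hv₂ : v ∈ closedNbhd n u₂) :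
    u₁ = u₂ :=
  (hS v).unique ⟨h₁, hv₁⟩ ⟨h₂, hv₂⟩

theorem mk_add_one_notMem (hS : IsEfficientDominatingSet n S) {i : ZMod n} {r : Fin 2}
    (h : (i, r) ∈ S) : (i, r + 1) ∉ S := fun h' => by
  have := congrArg Prod.snd <|
    hS.eq_of_mem h h' (self_mem_closedNbhd _) (mem_closedNbhd_comm.1 (by simp [closedNbhd]))
  simp at this

theorem next_columns_of_mem [Nontrivial (ZMod n)] (hS : IsEfficientDominatingSet n S)
    {i : ZMod n} {r : Fin 2} (h : (i, r) ∈ S) :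
    (i + 1, r) ∉ S ∧ (i + 1, r + 1) ∉ S ∧ (i + 2, r + 1) ∈ S := by
  have hv : (i + 1, r) ∈ closedNbhd n (i, r) := by simp [closedNbhd]
  have h₁ : (i + 1, r) ∉ S := fun h' => by
    have := congrArg Prod.fst (hS.eq_of_mem h' h (self_mem_closedNbhd _) hv)
    simp at this
  have h₂ : (i + 1, r + 1) ∉ S := fun h' => by
    have := congrArg Prod.snd <|
      hS.eq_of_mem h' h (mem_closedNbhd_comm.1 (by simp [closedNbhd])) hv
    simp at this
  refine ⟨h₁, h₂, ?_⟩
  obtain ⟨u, hu, hvu⟩ := (hS (i + 1, r + 1)).exists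
  rcases mem_closedNbhd.1 (mem_closedNbhd_comm.1 hvu) with rfl | rfl | rfl | rfl
  · exact absurd hu h₂
  · convert hu using 2
    ring
  · exact absurd (by simpa using hu) (hS.mk_add_one_notMem h)
  · exact absurd (by simpa [add_assoc] using hu) h₁

end IsEfficientDominatingSet

def rowLetter (r : Fin 2) : Bool × Bool := if r = 0 then letA else letB

section Words

variable {n : ℕ} {w : ZMod n → Bool × Bool}

theorem eq_rowLetter_iff {i : ZMod n} {r : Fin 2} :
    w i = rowLetter r ↔ (i, r) ∈ wordSet n w ∧ (i, r + 1) ∉ wordSet n w := by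
  fin_cases r <;> rcases h : w i with ⟨_ | _, _ | _⟩ <;>
    simp [wordSet, rowLetter, letA, letB, h]

theorem eq_letC_iff {i : ZMod n} (r : Fin 2) :
    w i = letC ↔ (i, r) ∉ wordSet n w ∧ (i, r + 1) ∉ wordSet n w := by
  fin_cases r <;> rcases h : w i with ⟨_ | _, _ | _⟩ <;> simp [wordSet, letC, h]

theorem IsEfficientDominatingSet.letter_cases (hS : IsEfficientDominatingSet n (wordSet n w))
    (i : ZMod n) : w i = letC ∨ w i = letA ∨ w i = letB := by
  rcases h : w i with ⟨_ | _, _ | _⟩ <;> simp [letC, letA, letB]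
  exact hS.mk_add_one_notMem (i := i) (r := 0) (by simp [wordSet, h]) (by simp [wordSet, h])

theorem IsEfficientDominatingSet.exists_eq_rowLetter
    (hS : IsEfficientDominatingSet n (wordSet n w)) : ∃ i r, w i = rowLetter r := by
  obtain ⟨⟨i, r⟩, hu, -⟩ := (hS (0, 0)).exists
  exact ⟨i, r, eq_rowLetter_iff.2 ⟨hu, hS.mk_add_one_notMem hu⟩⟩

theorem IsEfficientDominatingSet.rowLetter_step [Nontrivial (ZMod n)]
    (hS : IsEfficientDominatingSet n (wordSet n w)) {i : ZMod n} {r : Fin 2}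
    (h : w i = rowLetter r) : w (i + 1) = letC ∧ w (i + 2) = rowLetter (r + 1) := by
  obtain ⟨h₁, h₂, h₃⟩ := hS.next_columns_of_mem (eq_rowLetter_iff.1 h).1
  exact ⟨(eq_letC_iff r).2 ⟨h₁, h₂⟩, eq_rowLetter_iff.2 ⟨h₃, hS.mk_add_one_notMem h₃⟩⟩

theorem eq_pat4_of_alternating [NeZero n] {x y c : Bool × Bool}
    (hx : ∀ i, w i = x → w (i + 1) = c ∧ w (i + 2) = y)
    (hy : ∀ i, w i = y → w (i + 1) = c ∧ w (i + 2) = x) {s : ZMod n} (hs : w s = x)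
    (i : ZMod n) : w (i + s) = pat4 n x c y c i := by
  have hblock : ∀ j, w j = x → w (j + 1) = c ∧ w (j + 2) = y ∧ w (j + 3) = c ∧ w (j + 4) = x := by
    intro j hj
    obtain ⟨h₁, h₂⟩ := hx j hj
    obtain ⟨h₃, h₄⟩ := hy _ h₂
    refine ⟨h₁, h₂, ?_, ?_⟩
    · convert h₃ using 2; ring
    · convert h₄ using 2; ring
  have hperiod : ∀ q : ℕ, w (s + 4 * q) = x := by
    intro q
    induction q with
    | zero => simpa using hs
    | succ q ih => simpa [mul_add, ← add_assoc] using (hblock _ ih).2.2.2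
  have hi : i + s = s + 4 * (i.val / 4 : ℕ) + (i.val % 4 : ℕ) := by
    rw [add_assoc, ← Nat.cast_ofNat, ← Nat.cast_mul, ← Nat.cast_add, Nat.div_add_mod,
      ZMod.natCast_zmod_val, add_comm]
  obtain ⟨h₁, h₂, h₃, -⟩ := hblock _ (hperiod (i.val / 4))
  have : i.val % 4 < 4 := Nat.mod_lt _ (by norm_num)
  interval_cases hm : i.val % 4 <;> simp_all [pat4]

theorem ncard_wordSet_eq_ncard_letA_or_letB
    (hw : ∀ i, w i = letC ∨ w i = letA ∨ w i = letB) :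
    (wordSet n w).ncard = {i | w i = letA ∨ w i = letB}.ncard := by
  refine Set.ncard_congr (fun v _ => v.1) ?_ ?_ ?_
  · rintro ⟨i, r⟩ hv
    rcases hw i with h | h | h <;> fin_cases r <;> simp_all [wordSet, letC, letA, letB]
  · rintro ⟨i, r⟩ ⟨j, s⟩ hv hv' rfl
    rcases hw i with h | h | h <;> fin_cases r <;> fin_cases s <;>
      simp_all [wordSet, letC, letA, letB]
  · rintro i (h | h)
    exacts [⟨(i, 0), by simp [wordSet, h, letA], rfl⟩, ⟨(i, 1), by simp [wordSet, h, letB], rfl⟩]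

theorem ncard_letC_add_ncard_letA_or_letB [NeZero n]
    (hw : ∀ i, w i = letC ∨ w i = letA ∨ w i = letB) :
    {i | w i = letC}.ncard + {i | w i = letA ∨ w i = letB}.ncard = n := by
  have hcompl : {i | w i = letA ∨ w i = letB} = {i | w i = letC}ᶜ := by
    ext i
    rcases hw i with h | h | h <;> simp [h, letC, letA, letB]
  rw [hcompl, Set.ncard_add_ncard_compl, Nat.card_zmod]

end Words

section Zigzag

open Fin.NatCast

/-- The dominating set encoded by the word `(A C B C)^k`. -/
def zigzag (k : ℕ) : Finset (ZMod (4 * k) × Fin 2) :=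
  (range (2 * k)).image fun j => (((2 * j : ℕ) : ZMod (4 * k)), (j : Fin 2))

variable {k : ℕ} [NeZero k]

theorem mk_mem_zigzag (j : ℕ) : (((2 * j : ℕ) : ZMod (4 * k)), (j : Fin 2)) ∈ zigzag k := by
  refine mem_image.2 ⟨j % (2 * k), mem_range.2 (Nat.mod_lt _ (NeZero.pos _)), ?_⟩
  have h₁ : ((2 * (j % (2 * k)) : ℕ) : ZMod (4 * k)) = ((2 * j : ℕ) : ZMod (4 * k)) := by
    rw [ZMod.natCast_eq_natCast_iff', show 4 * k = 2 * (2 * k) by ring, Nat.mul_mod_mul_left,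
      Nat.mul_mod_mul_left, Nat.mod_mod]
  have h₂ : ((j % (2 * k) : ℕ) : Fin 2) = (j : Fin 2) := by
    ext
    simp [Fin.val_natCast, Nat.mod_mod_of_dvd _ (dvd_mul_right 2 k)]
  rw [h₁, h₂]

theorem isDominatingSet_zigzag : IsDominatingSet (4 * k) ↑(zigzag k) := by
  rw [isDominatingSet_iff]
  rintro ⟨i, r⟩
  obtain ⟨q, b, hb, rfl⟩ : ∃ q b : ℕ, b < 2 ∧ i = ((2 * q + b : ℕ) : ZMod (4 * k)) :=
    ⟨i.val / 2, i.val % 2, Nat.mod_lt _ two_pos, by rw [Nat.div_add_mod, ZMod.natCast_zmod_val]⟩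
  have hrow : ∀ a b : Fin 2, b = a ∨ b = a + 1 := by decide
  interval_cases b <;> rcases hrow (q : Fin 2) r with rfl | rfl
  · exact ⟨_, mk_mem_zigzag q, by simp [mem_closedNbhd]⟩
  · exact ⟨_, mk_mem_zigzag q, by simp [mem_closedNbhd]⟩
  · exact ⟨_, mk_mem_zigzag q, by simp [mem_closedNbhd]⟩
  · refine ⟨_, mk_mem_zigzag (q + 1), ?_⟩
    simp only [mem_closedNbhd, Nat.cast_add, Nat.cast_mul, Nat.cast_one, Prod.mk.injEq]
    exact Or.inr (Or.inr (Or.inl ⟨by ring, trivial⟩))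

theorem domNum_four_mul : domNum (4 * k) = 2 * k := by
  have hne :
      {m | ∃ S : Finset (ZMod (4 * k) × Fin 2), #S = m ∧ IsDominatingSet (4 * k) ↑S}.Nonempty :=
    ⟨_, zigzag k, rfl, isDominatingSet_zigzag⟩
  obtain ⟨S, hS, hdom⟩ := Nat.sInf_mem hne
  refine le_antisymm ?_ ?_
  · calc domNum (4 * k) ≤ #(zigzag k) := Nat.sInf_le ⟨_, rfl, isDominatingSet_zigzag⟩
      _ ≤ 2 * k := card_image_le.trans (card_range _).le
  · have := hdom.two_mul_le_four_mul_card
    rw [hS] at this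
    unfold domNum
    omega

end Zigzag

theorem classification_mod_zero (k : ℕ) (hk : 1 ≤ k)
    (w : ZMod (4 * k) → Bool × Bool) (hw : IsMinDomWord (4 * k) w) :
    (∀ i, w i = letC ∨ w i = letA ∨ w i = letB) ∧
    {i : ZMod (4 * k) | w i = letC}.ncard = 2 * k ∧
    {i : ZMod (4 * k) | w i = letA ∨ w i = letB}.ncard = 2 * k ∧
    ∃ s : ZMod (4 * k),
      (∀ i, w (i + s) = pat4 (4 * k) letB letC letA letC i) ∨
      (∀ i, w (i + s) = pat4 (4 * k) letA letC letB letC i) := by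
  have : NeZero k := ⟨by omega⟩
  have : Nontrivial (ZMod (4 * k)) := ZMod.nontrivial_iff.2 (by omega)
  obtain ⟨hdom, hcard⟩ := hw
  rw [domNum_four_mul] at hcard
  have hS := hdom.isEfficientDominatingSet (by rw [hcard]; ring)
  have hletters := hS.letter_cases
  have hAB : {i | w i = letA ∨ w i = letB}.ncard = 2 * k := by
    rw [← ncard_wordSet_eq_ncard_letA_or_letB hletters, hcard]
  have hC := ncard_letC_add_ncard_letA_or_letB hletters
  refine ⟨hletters, by omega, hAB, ?_⟩
  obtain ⟨s, r, hs⟩ := hS.exists_eq_rowLetter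
  have hpat := eq_pat4_of_alternating (fun _ => hS.rowLetter_step)
    (fun _ hi => by simpa [add_assoc] using hS.rowLetter_step hi) hs
  refine ⟨s, ?_⟩
  fin_cases r
  exacts [Or.inr hpat, Or.inl hpat]
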